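/- arXiv:1701.02134 — 3 statements merged into one kernel-verified Lean document; each statement's English description precedes it below -/
import Mathlib

section
/- Let U ⊆ ℂ be open, y : U → ℂ holomorphic, and a, b, c > 0. Define f : U → ℝ³ by f = (2a Re y, 2b Im y, c(1 − |y|²)) / (1 + |y|²) (the affine image, with axes scaled by a, b, c, of the inverse stereographic projection of y to the unit sphere). Then, with B_ℂ the complex-bilinear extension of the Euclidean inner product on ℝ³ and f_z := ½(f_u − i f_v) taken with respect to z = u + iv, one has B_ℂ(f_z, f_z) = (y′)² · ( a²(1 − ȳ²)² − b²(1 + ȳ²)² + 4c² ȳ² ) / (1 + |y|²)⁴ at every point of U, where y′ is the complex derivative of y. (Paper: Section 2, derivation of equation (orthoEE).) -/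
/-!
Regard `ȳ` as an independent variable: the components of `f`, complexified, are
`g(y, ȳ)` for a map `g(w, v)` that is holomorphic in both variables. For holomorphic `y`
one has `∂_z ȳ = 0`, so the chain rule for the Wirtinger derivative gives
`f_z = y′ · ∂_w g(y, ȳ)`, and `B_ℂ(f_z, f_z)` becomes a rational identity in `y` and `ȳ`.
-/

/-- Componentwise inclusion `ℝ³ ↪ ℂ³`. -/
noncomputable def toC (x : ℝ × ℝ × ℝ) : ℂ × ℂ × ℂ := ((x.1 : ℂ), (x.2.1 : ℂ), (x.2.2 : ℂ))

/-- Partial derivatives of a map `f : ℂ → ℝ³` with respect to the real coordinates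
`z = u + iv`. -/
noncomputable def pdu (f : ℂ → ℝ × ℝ × ℝ) (p : ℂ) : ℝ × ℝ × ℝ := fderiv ℝ f p 1
noncomputable def pdv (f : ℂ → ℝ × ℝ × ℝ) (p : ℂ) : ℝ × ℝ × ℝ := fderiv ℝ f p Complex.I

/-- `f_z := ½ (f_u − i f_v)`, regarded as a vector in `ℂ³`. -/
noncomputable def pdz (f : ℂ → ℝ × ℝ × ℝ) (p : ℂ) : ℂ × ℂ × ℂ :=
  (1 / 2 : ℂ) • (toC (pdu f p) - Complex.I • toC (pdv f p))

/-- The complex-bilinear extension of the Euclidean inner product of `ℝ³` to `ℂ³`. -/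
def BEc (x y : ℂ × ℂ × ℂ) : ℂ := x.1 * y.1 + x.2.1 * y.2.1 + x.2.2 * y.2.2

open Complex ComplexConjugate

noncomputable def wirtingerDeriv {E : Type*} [NormedAddCommGroup E] [NormedSpace ℂ E]
    (F : ℂ → E) (p : ℂ) : E :=
  (1 / 2 : ℂ) • (fderiv ℝ F p 1 - I • fderiv ℝ F p I)

theorem wirtingerDeriv_comp_holomorphic_conj {E : Type*} [NormedAddCommGroup E]
    [NormedSpace ℂ E] {g : ℂ × ℂ → E} {y : ℂ → ℂ} {p : ℂ}
    (hg : DifferentiableAt ℂ g (y p, conj (y p))) (hy : DifferentiableAt ℂ y p) :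
    wirtingerDeriv (fun w => g (y w, conj (y w))) p =
      deriv y p • deriv (fun w => g (w, conj (y p))) (y p) := by
  obtain ⟨G, hG⟩ := hg
  have hY := hy.hasDerivAt.hasFDerivAt.restrictScalars ℝ
  have hcomp : HasFDerivAt (fun w => g (y w, conj (y w))) _ p :=
    (hG.restrictScalars ℝ).comp p (hY.prodMk hY.star)
  set d := deriv y p
  have hpartial : deriv (fun w => g (w, conj (y p))) (y p) = G (1, 0) :=
    (hG.comp (y p) (hasFDerivAt_prodMk_left (𝕜 := ℂ) (y p) (conj (y p)))).hasDerivAt.deriv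
  have hsplit (u v : ℂ) : G (u, v) = u • G (1, 0) + v • G (0, 1) := by
    rw [← G.map_smul, ← G.map_smul, ← map_add]
    simp
  rw [wirtingerDeriv, hcomp.fderiv, hpartial]
  simp only [ContinuousLinearMap.comp_apply, ContinuousLinearMap.prod_apply,
    ContinuousLinearMap.coe_restrictScalars', ContinuousLinearMap.toSpanSingleton_apply,
    ContinuousLinearEquiv.coe_coe, starL'_apply, smul_eq_mul, one_mul]
  -- for the real derivative `L`, the `conj d`-parts of `L 1` and `I • L I` cancel, the `d`-parts add
  rw [hsplit d, hsplit (I * d)]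
  simp only [star_mul', Complex.star_def, conj_I]
  match_scalars
  · linear_combination (-d / 2) * I_sq
  · linear_combination (conj d / 2) * I_sq

noncomputable def toCL : ℝ × ℝ × ℝ →L[ℝ] ℂ × ℂ × ℂ :=
  ofRealCLM.prodMap (ofRealCLM.prodMap ofRealCLM)

theorem coe_toCL : ⇑toCL = toC := rfl

theorem pdz_eq_wirtingerDeriv {f : ℂ → ℝ × ℝ × ℝ} {p : ℂ}
    (hf : DifferentiableAt ℝ (toC ∘ f) p) : pdz f p = wirtingerDeriv (toC ∘ f) p := by
  have hf' : DifferentiableAt ℝ f p := by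
    have := (reCLM.prodMap (reCLM.prodMap reCLM)).differentiableAt.comp p hf
    simpa [Function.comp_def, toC] using this
  rw [wirtingerDeriv, ← coe_toCL, (toCL.hasFDerivAt.comp p hf'.hasFDerivAt).fderiv]
  rfl

/-- Holomorphic in `(w, v)`; at `v = conj w` it is the scaled inverse stereographic
projection of `w`, complexified. -/
noncomputable def scaledStereoExt (a b c : ℂ) (q : ℂ × ℂ) : ℂ × ℂ × ℂ :=
  (1 + q.1 * q.2)⁻¹ • (a * (q.1 + q.2), -I * b * (q.1 - q.2), c * (1 - q.1 * q.2))

theorem toC_scaledStereographic (a b c : ℝ) (z : ℂ) :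
    toC (2 * a * z.re / (1 + normSq z), 2 * b * z.im / (1 + normSq z),
        c * (1 - normSq z) / (1 + normSq z)) = scaledStereoExt a b c (z, conj z) := by
  simp only [toC, scaledStereoExt, mul_conj, Prod.smul_mk, smul_eq_mul]
  push_cast
  refine Prod.ext ?_ (Prod.ext ?_ ?_) <;> dsimp only
  · rw [add_conj]; push_cast; ring
  · rw [sub_conj]; push_cast
    linear_combination (2 * z.im * b / (1 + normSq z : ℂ)) * I_sq
  · ring

theorem differentiableAt_scaledStereoExt {a b c : ℂ} {q : ℂ × ℂ} (hq : 1 + q.1 * q.2 ≠ 0) :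
    DifferentiableAt ℂ (scaledStereoExt a b c) q := by
  unfold scaledStereoExt
  fun_prop (disch := exact hq)

theorem hasDerivAt_scaledStereoExt_fst (a b c : ℂ) {w v : ℂ} (h : 1 + w * v ≠ 0) :
    HasDerivAt (fun w => scaledStereoExt a b c (w, v))
      (((1 + w * v) ^ 2)⁻¹ • (a * (1 - v ^ 2), -I * b * (1 + v ^ 2), -2 * c * v)) w := by
  have hden : HasDerivAt (fun w => 1 + w * v) v w := by
    simpa using ((hasDerivAt_id w).mul_const v).const_add 1
  have hnum : HasDerivAt (fun w => (a * (w + v), -I * b * (w - v), c * (1 - w * v)))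
      (a, -I * b, -(c * v)) w := by
    have h1 : HasDerivAt (fun w => a * (w + v)) a w := by
      simpa using ((hasDerivAt_id w).add_const v).const_mul a
    have h2 : HasDerivAt (fun w => -I * b * (w - v)) (-I * b) w := by
      simpa using ((hasDerivAt_id w).sub_const v).const_mul (-I * b)
    have h3 : HasDerivAt (fun w => c * (1 - w * v)) (-(c * v)) w := by
      simpa using (((hasDerivAt_id w).mul_const v).const_sub 1).const_mul c
    exact h1.prodMk (h2.prodMk h3)
  refine ((hden.inv h).smul hnum).congr_deriv ?_
  simp only [Pi.inv_apply, Prod.smul_mk, smul_eq_mul, Prod.mk_add_mk]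
  refine Prod.ext ?_ (Prod.ext ?_ ?_) <;> dsimp only <;> field_simp <;> ring

theorem BEc_smul_smul (s : ℂ) (x : ℂ × ℂ × ℂ) : BEc (s • x) (s • x) = s ^ 2 * BEc x x := by
  simp only [BEc, Prod.smul_fst, Prod.smul_snd, smul_eq_mul]
  ring

theorem fz_fz_of_scaled_stereographic_general
    (U : Set ℂ) (hUopen : IsOpen U)
    (y : ℂ → ℂ) (hy : DifferentiableOn ℂ y U)
    (a b c : ℝ)
    (f : ℂ → ℝ × ℝ × ℝ)
    (hf : ∀ z, f z =
      (2 * a * (y z).re / (1 + Complex.normSq (y z)),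
       2 * b * (y z).im / (1 + Complex.normSq (y z)),
       c * (1 - Complex.normSq (y z)) / (1 + Complex.normSq (y z)))) :
    ∀ p ∈ U,
      BEc (pdz f p) (pdz f p) =
        (deriv y p) ^ 2 *
          ((a : ℂ) ^ 2 * (1 - (starRingEnd ℂ) (y p) ^ 2) ^ 2
            - (b : ℂ) ^ 2 * (1 + (starRingEnd ℂ) (y p) ^ 2) ^ 2
            + 4 * (c : ℂ) ^ 2 * (starRingEnd ℂ) (y p) ^ 2) /
          ((1 + Complex.normSq (y p) : ℝ) : ℂ) ^ 4 := by
  intro p hp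
  have hyp : DifferentiableAt ℂ y p := hy.differentiableAt (hUopen.mem_nhds hp)
  have hD : 1 + y p * conj (y p) ≠ 0 := by
    rw [mul_conj]; exact_mod_cast (add_pos_of_pos_of_nonneg one_pos (normSq_nonneg _)).ne'
  have hf' : toC ∘ f = fun w => scaledStereoExt a b c (y w, conj (y w)) :=
    funext fun w => by rw [Function.comp_apply, hf, toC_scaledStereographic]
  have hg : DifferentiableAt ℂ (scaledStereoExt a b c) (y p, conj (y p)) :=
    differentiableAt_scaledStereoExt hD
  have hfp : DifferentiableAt ℝ (toC ∘ f) p := by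
    rw [hf']
    exact (hg.restrictScalars ℝ).comp p
      ((hyp.restrictScalars ℝ).prodMk (hyp.restrictScalars ℝ).star)
  rw [pdz_eq_wirtingerDeriv hfp, hf', wirtingerDeriv_comp_holomorphic_conj hg hyp,
    (hasDerivAt_scaledStereoExt_fst _ _ _ hD).deriv, BEc_smul_smul, BEc_smul_smul]
  push_cast
  rw [← mul_conj]
  simp only [BEc]
  generalize 1 + y p * conj (y p) = D
  linear_combination (deriv y p ^ 2 * b ^ 2 * (1 + conj (y p) ^ 2) ^ 2 / D ^ 4) * I_sq

/-- **Section 2, derivation of (orthoEE).** For the affine image, with axes scaled by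
`a, b, c`, of the inverse stereographic projection of a holomorphic function `y`, one has
`B_ℂ(f_z, f_z) = (y′)² (a²(1−ȳ²)² − b²(1+ȳ²)² + 4c²ȳ²) / (1+|y|²)⁴`. -/
theorem fz_fz_of_scaled_stereographic
    (U : Set ℂ) (hUopen : IsOpen U)
    (y : ℂ → ℂ) (hy : DifferentiableOn ℂ y U)
    (a b c : ℝ) (ha : 0 < a) (hb : 0 < b) (hc : 0 < c)
    (f : ℂ → ℝ × ℝ × ℝ)
    (hf : ∀ z, f z =
      (2 * a * (y z).re / (1 + Complex.normSq (y z)),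
       2 * b * (y z).im / (1 + Complex.normSq (y z)),
       c * (1 - Complex.normSq (y z)) / (1 + Complex.normSq (y z)))) :
    ∀ p ∈ U,
      BEc (pdz f p) (pdz f p) =
        (deriv y p) ^ 2 *
          ((a : ℂ) ^ 2 * (1 - (starRingEnd ℂ) (y p) ^ 2) ^ 2
            - (b : ℂ) ^ 2 * (1 + (starRingEnd ℂ) (y p) ^ 2) ^ 2
            + 4 * (c : ℂ) ^ 2 * (starRingEnd ℂ) (y p) ^ 2) /
          ((1 + Complex.normSq (y p) : ℝ) : ℂ) ^ 4 :=
  fz_fz_of_scaled_stereographic_general U hUopen y hy a b c f hf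
end

section
/- Let U ⊆ ℂ be open, y : U → ℂ holomorphic, a, b, c > 0, and suppose there is a real constant ρ with (y′)² = ρ ( a²(1 − y²)² − b²(1 + y²)² + 4c² y² ) on U. Define f : U → ℝ³ by f = (2a Re y, 2b Im y, c(1 − |y|²)) / (1 + |y|²). Then f takes values in the ellipsoid {(x₁/a)² + (x₂/b)² + (x₃/c)² = 1} and the Euclidean inner product ⟨f_u, f_v⟩ vanishes identically on U; i.e. (u, v) are orthogonal (hence curvature line) parameters for the ellipsoid. (Paper: Section 2, leading to Lemma 2.1.) -/
/-- The Euclidean inner product on `ℝ³`. -/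
def BE (x y : ℝ × ℝ × ℝ) : ℝ := x.1 * y.1 + x.2.1 * y.2.1 + x.2.2 * y.2.2

/-!
The map `f` is `g ∘ y`, where `g = ellipsoidStereo a b c` is inverse stereographic projection
onto the unit sphere followed by `diag(a, b, c)`, so `f_u = Dg_y (y′)` and `f_v = Dg_y (i y′)`.
A direct computation gives `⟨Dg_w d, Dg_w (i d)⟩ = -2 Im (d² · conj P(w)) / (1 + |w|²)⁴`, where
`P = ellipsoidQuartic a b c` is the quartic on the right of the ODE. The ODE says `y′² = ρ P(y)`
with `ρ` real, so `y′² · conj P(y) = ρ |P(y)|²` is real and the inner product vanishes.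
-/

open Complex ComplexConjugate

noncomputable def ellipsoidStereo (a b c : ℝ) (w : ℂ) : ℝ × ℝ × ℝ :=
  (2 * a * w.re / (1 + normSq w), 2 * b * w.im / (1 + normSq w),
    c * (1 - normSq w) / (1 + normSq w))

noncomputable def ellipsoidStereoDeriv (a b c : ℝ) (w d : ℂ) : ℝ × ℝ × ℝ :=
  (2 * a * (d.re * (1 + normSq w) - 2 * w.re * (w.re * d.re + w.im * d.im)) / (1 + normSq w) ^ 2,
   2 * b * (d.im * (1 + normSq w) - 2 * w.im * (w.re * d.re + w.im * d.im)) / (1 + normSq w) ^ 2,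
   -4 * c * (w.re * d.re + w.im * d.im) / (1 + normSq w) ^ 2)

def ellipsoidQuartic (a b c : ℝ) (w : ℂ) : ℂ :=
  (a : ℂ) ^ 2 * (1 - w ^ 2) ^ 2 - (b : ℂ) ^ 2 * (1 + w ^ 2) ^ 2 + 4 * (c : ℂ) ^ 2 * w ^ 2

theorem one_add_normSq_ne_zero (w : ℂ) : 1 + normSq w ≠ 0 :=
  (add_pos_of_pos_of_nonneg one_pos (normSq_nonneg w)).ne'

theorem HasDerivAt.normSq {γ : ℝ → ℂ} {γ' : ℂ} {t : ℝ} (hγ : HasDerivAt γ γ' t) :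
    HasDerivAt (fun s => normSq (γ s)) (2 * ((γ t).re * γ'.re + (γ t).im * γ'.im)) t := by
  have hre : HasDerivAt (fun s => (γ s).re) γ'.re t := reCLM.hasFDerivAt.comp_hasDerivAt t hγ
  have him : HasDerivAt (fun s => (γ s).im) γ'.im t := imCLM.hasFDerivAt.comp_hasDerivAt t hγ
  simp only [normSq_apply]
  exact ((hre.fun_mul hre).add (him.fun_mul him)).congr_deriv (by ring)

theorem ellipsoidStereo_mem_ellipsoid {a b c : ℝ} (ha : a ≠ 0) (hb : b ≠ 0) (hc : c ≠ 0) (w : ℂ) :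
    ((ellipsoidStereo a b c w).1 / a) ^ 2 + ((ellipsoidStereo a b c w).2.1 / b) ^ 2 +
      ((ellipsoidStereo a b c w).2.2 / c) ^ 2 = 1 := by
  have hN := one_add_normSq_ne_zero w
  simp only [ellipsoidStereo]
  field_simp
  rw [normSq_apply]
  ring

section Derivative

variable (a b c : ℝ)

theorem HasDerivAt.ellipsoidStereo {γ : ℝ → ℂ} {γ' : ℂ} {t : ℝ} (hγ : HasDerivAt γ γ' t) :
    HasDerivAt (fun s => ellipsoidStereo a b c (γ s)) (ellipsoidStereoDeriv a b c (γ t) γ') t := by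
  have hre : HasDerivAt (fun s => (γ s).re) γ'.re t := reCLM.hasFDerivAt.comp_hasDerivAt t hγ
  have him : HasDerivAt (fun s => (γ s).im) γ'.im t := imCLM.hasFDerivAt.comp_hasDerivAt t hγ
  have hS := hγ.normSq
  have hN := one_add_normSq_ne_zero (γ t)
  refine (((hre.const_mul (2 * a)).fun_div (hS.const_add 1) hN).prodMk
    (((him.const_mul (2 * b)).fun_div (hS.const_add 1) hN).prodMk
      (((hS.const_sub 1).const_mul c).fun_div (hS.const_add 1) hN))).congr_deriv ?_
  simp only [ellipsoidStereoDeriv, Prod.mk.injEq]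
  refine ⟨?_, ?_, ?_⟩ <;> ring

theorem differentiable_ellipsoidStereo : Differentiable ℝ (ellipsoidStereo a b c) := by
  unfold ellipsoidStereo
  simp only [div_eq_mul_inv, normSq_apply]
  fun_prop (disch := intro w; nlinarith [mul_self_nonneg w.re, mul_self_nonneg w.im])

theorem fderiv_ellipsoidStereo_comp_apply {y : ℂ → ℂ} {p : ℂ} (hy : DifferentiableAt ℂ y p)
    (v : ℂ) :
    fderiv ℝ (ellipsoidStereo a b c ∘ y) p v =
      ellipsoidStereoDeriv a b c (y p) (deriv y p * v) := by
  have hline : HasDerivAt (fun t : ℝ => p + t • v) v 0 := by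
    simpa using ((hasDerivAt_id (0 : ℝ)).smul_const v).const_add p
  have hcurve : HasDerivAt (fun t : ℝ => y (p + t • v)) (deriv y p * v) 0 :=
    hy.hasDerivAt.comp_of_eq 0 hline (by simp)
  have hline_deriv : HasLineDerivAt ℝ (ellipsoidStereo a b c ∘ y)
      (ellipsoidStereoDeriv a b c (y p) (deriv y p * v)) p v := by
    have h := hcurve.ellipsoidStereo a b c
    rwa [zero_smul, add_zero] at h
  have hdiff : DifferentiableAt ℝ (ellipsoidStereo a b c ∘ y) p :=
    (differentiable_ellipsoidStereo a b c _).comp p (hy.restrictScalars ℝ)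
  rw [← hdiff.lineDeriv_eq_fderiv]
  exact hline_deriv.lineDeriv

theorem BE_ellipsoidStereoDeriv_mul_I (w d : ℂ) :
    BE (ellipsoidStereoDeriv a b c w d) (ellipsoidStereoDeriv a b c w (d * I)) =
      -2 * (d ^ 2 * conj (ellipsoidQuartic a b c w)).im / (1 + normSq w) ^ 4 := by
  simp only [BE, ellipsoidStereoDeriv, ellipsoidQuartic, normSq_apply, sq, map_add, map_sub,
    map_mul, map_one, map_ofNat, conj_ofReal, mul_re, mul_im, add_re, add_im, sub_re, sub_im,
    conj_re, conj_im, ofReal_re, ofReal_im, one_re, one_im, re_ofNat, im_ofNat, I_re, I_im]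
  field_simp
  ring

end Derivative

theorem im_ofReal_mul_mul_conj (ρ : ℝ) (z : ℂ) : ((ρ : ℂ) * z * conj z).im = 0 := by
  rw [mul_assoc, mul_conj, ← ofReal_mul, ofReal_im]

/-- **Section 2, leading to Lemma 2.1.** If the holomorphic function `y` satisfies the
ODE `(y′)² = ρ (a²(1−y²)² − b²(1+y²)² + 4c²y²)` with a real constant `ρ`, then the map
`f = (2a Re y, 2b Im y, c(1−|y|²))/(1+|y|²)` takes values in the ellipsoid with half-axes
`a, b, c` and its parameter lines are orthogonal: `⟨f_u, f_v⟩ = 0`. -/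
theorem ellipsoid_curvature_line_parameters
    (U : Set ℂ) (hUopen : IsOpen U)
    (y : ℂ → ℂ) (hy : DifferentiableOn ℂ y U)
    (a b c : ℝ) (ha : 0 < a) (hb : 0 < b) (hc : 0 < c)
    (ρ : ℝ)
    (hode : ∀ z ∈ U,
      (deriv y z) ^ 2 =
        (ρ : ℂ) * ((a : ℂ) ^ 2 * (1 - y z ^ 2) ^ 2 - (b : ℂ) ^ 2 * (1 + y z ^ 2) ^ 2
          + 4 * (c : ℂ) ^ 2 * y z ^ 2))
    (f : ℂ → ℝ × ℝ × ℝ)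
    (hf : ∀ z, f z =
      (2 * a * (y z).re / (1 + Complex.normSq (y z)),
       2 * b * (y z).im / (1 + Complex.normSq (y z)),
       c * (1 - Complex.normSq (y z)) / (1 + Complex.normSq (y z)))) :
    ∀ p ∈ U,
      ((f p).1 / a) ^ 2 + ((f p).2.1 / b) ^ 2 + ((f p).2.2 / c) ^ 2 = 1 ∧
      BE (pdu f p) (pdv f p) = 0 := by
  intro p hp
  have hf : f = ellipsoidStereo a b c ∘ y := funext hf
  have hyp : DifferentiableAt ℂ y p := hy.differentiableAt (hUopen.mem_nhds hp)
  have hode : deriv y p ^ 2 = ρ * ellipsoidQuartic a b c (y p) := hode p hp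
  subst hf
  refine ⟨ellipsoidStereo_mem_ellipsoid ha.ne' hb.ne' hc.ne' (y p), ?_⟩
  rw [pdu, pdv, fderiv_ellipsoidStereo_comp_apply a b c hyp,
    fderiv_ellipsoidStereo_comp_apply a b c hyp, mul_one, BE_ellipsoidStereoDeriv_mul_I, hode,
    im_ofReal_mul_mul_conj, mul_zero, zero_div]
end

section
/- Let U ⊆ ℂ be open, y : U → ℂ holomorphic with |y| ≠ 1 on U, a, b, c > 0, and suppose there is a real constant ρ with (y′)² = ρ ( a²(1 + y²)² − b²(1 − y²)² − 4c² y² ) on U. Define f : U → ℝ³ by f = (2a Re y, 2b Im y, c(1 + |y|²)) / (1 − |y|²). Then f takes values in the 2-sheeted hyperboloid {(x₁/a)² + (x₂/b)² − (x₃/c)² = −1} and B_M(f_u, f_v) = 0 identically on U, where B_M is the Minkowski bilinear form; i.e. (u, v) are orthogonal (hence curvature line) parameters for the hyperboloid in Minkowski space. (Paper: Section 4, derivation of equation (orthoH2M) and Lemma 4.1.) -/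
/-- The Minkowski bilinear form on `ℝ³`. -/
def BM (x y : ℝ × ℝ × ℝ) : ℝ := x.1 * y.1 + x.2.1 * y.2.1 - x.2.2 * y.2.2

open Complex ComplexConjugate

theorem fderiv_comp_apply_of_differentiableAt {E : Type*} [NormedAddCommGroup E]
    [NormedSpace ℝ E] {g : ℂ → E} {y : ℂ → ℂ} {p : ℂ} (hg : DifferentiableAt ℝ g (y p))
    (hy : DifferentiableAt ℂ y p) (v : ℂ) :
    fderiv ℝ (g ∘ y) p v = fderiv ℝ g (y p) (deriv y p * v) := by
  rw [fderiv_comp p hg (hy.restrictScalars ℝ), ContinuousLinearMap.comp_apply,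
    hy.fderiv_restrictScalars ℝ, ContinuousLinearMap.coe_restrictScalars',
    hy.hasDerivAt.hasFDerivAt.fderiv, ContinuousLinearMap.toSpanSingleton_apply, smul_eq_mul,
    mul_comm]

theorem one_sub_normSq_ne_zero {w : ℂ} (hw : ‖w‖ ≠ 1) : 1 - normSq w ≠ 0 := by
  rw [sub_ne_zero, ne_comm, normSq_eq_norm_sq]
  exact (pow_eq_one_iff_of_nonneg (norm_nonneg w) two_ne_zero).not.mpr hw

noncomputable def hyperboloidParam (a b c : ℝ) (w : ℂ) : ℝ × ℝ × ℝ :=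
  (2 * a * w.re / (1 - normSq w), 2 * b * w.im / (1 - normSq w),
    c * (1 + normSq w) / (1 - normSq w))

def hyperboloidQuartic (a b c : ℝ) (w : ℂ) : ℂ :=
  (a : ℂ) ^ 2 * (1 + w ^ 2) ^ 2 - (b : ℂ) ^ 2 * (1 - w ^ 2) ^ 2 - 4 * (c : ℂ) ^ 2 * w ^ 2

section hyperboloidParam

variable {a b c : ℝ} {w : ℂ}

theorem hyperboloidParam_on_hyperboloid (ha : a ≠ 0) (hb : b ≠ 0) (hc : c ≠ 0)
    (hw : 1 - normSq w ≠ 0) :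
    ((hyperboloidParam a b c w).1 / a) ^ 2 + ((hyperboloidParam a b c w).2.1 / b) ^ 2
      - ((hyperboloidParam a b c w).2.2 / c) ^ 2 = -1 := by
  simp only [hyperboloidParam]
  field_simp
  rw [normSq_apply]
  ring

variable (a b c)

theorem differentiableAt_hyperboloidParam (hw : 1 - normSq w ≠ 0) :
    DifferentiableAt ℝ (hyperboloidParam a b c) w := by
  unfold hyperboloidParam
  simp only [normSq_apply] at hw ⊢
  fun_prop (disch := exact hw)

theorem fderiv_hyperboloidParam_apply (hw : 1 - normSq w ≠ 0) (d : ℂ) :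
    fderiv ℝ (hyperboloidParam a b c) w d =
      (2 * a * (d.re * (1 - normSq w) + 2 * w.re * (w.re * d.re + w.im * d.im))
          / (1 - normSq w) ^ 2,
        2 * b * (d.im * (1 - normSq w) + 2 * w.im * (w.re * d.re + w.im * d.im))
          / (1 - normSq w) ^ 2,
        4 * c * (w.re * d.re + w.im * d.im) / (1 - normSq w) ^ 2) := by
  simp only [normSq_apply] at hw ⊢
  have hre := reCLM.hasFDerivAt (x := w)
  have him := imCLM.hasFDerivAt (x := w)
  have hN := (hre.mul hre).add (him.mul him)
  have hinv := (hasFDerivAt_inv' (𝕜 := ℝ) (R := ℝ) hw).comp w ((hasFDerivAt_const 1 w).sub hN)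
  have hF := ((hre.const_mul (2 * a)).mul hinv).prodMk
    (((him.const_mul (2 * b)).mul hinv).prodMk
      ((((hasFDerivAt_const 1 w).add hN).const_mul c).mul hinv))
  rw [(hF.congr_of_eventuallyEq (Filter.Eventually.of_forall fun z => by
    simp [hyperboloidParam, normSq_apply, div_eq_mul_inv])).fderiv]
  simp only [reCLM_apply, imCLM_apply, zero_sub, neg_add_rev, ContinuousLinearMap.comp_add,
    ContinuousLinearMap.comp_neg, ContinuousLinearMap.comp_smulₛₗ, Real.ringHom_apply,
    ContinuousLinearMap.neg_comp, smul_neg, neg_neg, smul_add, Function.comp_apply, Pi.sub_apply,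
    Pi.add_apply, Pi.mul_apply, zero_add, ContinuousLinearMap.prod_apply, add_apply, smul_apply,
    ContinuousLinearMap.comp_apply, ContinuousLinearMap.mulLeftRight_apply, smul_eq_mul,
    Prod.mk.injEq]
  refine ⟨?_, ?_, ?_⟩ <;> field_simp <;> ring

theorem BM_fderiv_hyperboloidParam_mul_I (hw : 1 - normSq w ≠ 0) (d : ℂ) :
    BM (fderiv ℝ (hyperboloidParam a b c) w d) (fderiv ℝ (hyperboloidParam a b c) w (d * I)) =
      -2 * (d ^ 2 * conj (hyperboloidQuartic a b c w)).im / (1 - normSq w) ^ 4 := by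
  rw [fderiv_hyperboloidParam_apply a b c hw, fderiv_hyperboloidParam_apply a b c hw]
  simp only [BM, hyperboloidQuartic, normSq_apply, mul_re, mul_im, I_re, I_im, sub_re, sub_im,
    add_re, add_im, conj_re, conj_im, ofReal_re, ofReal_im, one_re, one_im, pow_two, map_sub,
    map_mul, map_add, map_one, conj_ofReal, map_ofNat, re_ofNat, im_ofNat] at hw ⊢
  field_simp
  ring

end hyperboloidParam

/-- **Section 4, (orthoH2M) and Lemma 4.1.** If the holomorphic function `y` (with `|y| ≠ 1`)
satisfies the ODE `(y′)² = ρ (a²(1+y²)² − b²(1−y²)² − 4c²y²)` with a real constant `ρ`, then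
the map `f = (2a Re y, 2b Im y, c(1+|y|²))/(1−|y|²)` takes values in the 2-sheeted hyperboloid
and its parameter lines are Minkowski-orthogonal: `B_M(f_u, f_v) = 0`. -/
theorem hyperboloid_curvature_line_parameters
    (U : Set ℂ) (hUopen : IsOpen U)
    (y : ℂ → ℂ) (hy : DifferentiableOn ℂ y U)
    (hy1 : ∀ z ∈ U, ‖y z‖ ≠ 1)
    (a b c : ℝ) (ha : 0 < a) (hb : 0 < b) (hc : 0 < c)
    (ρ : ℝ)
    (hode : ∀ z ∈ U,
      (deriv y z) ^ 2 =
        (ρ : ℂ) * ((a : ℂ) ^ 2 * (1 + y z ^ 2) ^ 2 - (b : ℂ) ^ 2 * (1 - y z ^ 2) ^ 2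
          - 4 * (c : ℂ) ^ 2 * y z ^ 2))
    (f : ℂ → ℝ × ℝ × ℝ)
    (hf : ∀ z, f z =
      (2 * a * (y z).re / (1 - Complex.normSq (y z)),
       2 * b * (y z).im / (1 - Complex.normSq (y z)),
       c * (1 + Complex.normSq (y z)) / (1 - Complex.normSq (y z)))) :
    ∀ p ∈ U,
      ((f p).1 / a) ^ 2 + ((f p).2.1 / b) ^ 2 - ((f p).2.2 / c) ^ 2 = -1 ∧
      BM (pdu f p) (pdv f p) = 0 := by
  intro p hp
  have hw := one_sub_normSq_ne_zero (hy1 p hp)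
  have hf_comp : f = hyperboloidParam a b c ∘ y := funext hf
  refine ⟨by rw [hf]; exact hyperboloidParam_on_hyperboloid ha.ne' hb.ne' hc.ne' hw, ?_⟩
  have hyp : DifferentiableAt ℂ y p := hy.differentiableAt (hUopen.mem_nhds hp)
  have hg := differentiableAt_hyperboloidParam a b c hw
  have hode_p : deriv y p ^ 2 = ρ * hyperboloidQuartic a b c (y p) := hode p hp
  rw [pdu, pdv, hf_comp, fderiv_comp_apply_of_differentiableAt hg hyp,
    fderiv_comp_apply_of_differentiableAt hg hyp, mul_one,
    BM_fderiv_hyperboloidParam_mul_I a b c hw, hode_p, mul_assoc, mul_conj]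
  simp
end
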